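/- arXiv:0905.0516 — 3 statements merged into one kernel-verified Lean document; each statement's English description precedes it below -/
import Mathlib

section
/- Let $G_1, G_2$ be groups and let $M_1, M_2 \le G_1 \times G_2$ be subgroups, both with full one-dimensional projections. For $j=1,2$ let $L_{j,1} := \{g\in G_1 : (g,1)\in M_j\}$ and $L_{j,2} := \{g\in G_2 : (1,g)\in M_j\}$ be the slices of $M_j$. Suppose $\Phi_i : G_i \to G_i$ are automorphisms and $h_i, k_i \in G_i$ for $i=1,2$ satisfy $(h_1,h_2)\cdot (\Phi_1\times\Phi_2)(M_1)\cdot (k_1,k_2) = M_2$. Then $\Phi_1(L_{1,1}) = L_{2,1}$ and $\Phi_2(L_{1,2}) = L_{2,2}$. -/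
lemma slice_conj_fst {A B : Type*} [Group A] [Group B] (M : Subgroup (A × B))
    (hf : M.map (MonoidHom.fst A B) = ⊤) {g : A} (hg : ((g, 1) : A × B) ∈ M) (x : A) :
    ((x * g * x⁻¹, 1) : A × B) ∈ M := by
  have hx : x ∈ M.map (MonoidHom.fst A B) := hf ▸ Subgroup.mem_top x
  obtain ⟨⟨a, b⟩, hab, ha⟩ := hx
  simp only [MonoidHom.coe_fst] at ha
  have h := M.mul_mem (M.mul_mem hab hg) (M.inv_mem hab)
  have e : ((a, b) * (g, 1) * (a, b)⁻¹ : A × B) = (a * g * a⁻¹, 1) := by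
    simp [Prod.ext_iff]
  rw [e, ha] at h
  exact h

lemma slice_conj_snd {A B : Type*} [Group A] [Group B] (M : Subgroup (A × B))
    (hf : M.map (MonoidHom.snd A B) = ⊤) {g : B} (hg : ((1, g) : A × B) ∈ M) (x : B) :
    ((1, x * g * x⁻¹) : A × B) ∈ M := by
  have hx : x ∈ M.map (MonoidHom.snd A B) := hf ▸ Subgroup.mem_top x
  obtain ⟨⟨a, b⟩, hab, hb⟩ := hx
  simp only [MonoidHom.coe_snd] at hb
  have h := M.mul_mem (M.mul_mem hab hg) (M.inv_mem hab)
  have e : ((a, b) * (1, g) * (a, b)⁻¹ : A × B) = (1, b * g * b⁻¹) := by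
    simp [Prod.ext_iff]
  rw [e, hb] at h
  exact h

lemma slices_aux_fst {A B : Type*} [Group A] [Group B] (M₁ M₂ : Subgroup (A × B))
    (hf11 : M₁.map (MonoidHom.fst A B) = ⊤) (hf21 : M₂.map (MonoidHom.fst A B) = ⊤)
    (Φ₁ : A ≃* A) (Φ₂ : B ≃* B) (h₁ k₁ : A) (h₂ k₂ : B)
    (heq : ∀ p : A × B, p ∈ M₂ ↔ ∃ m ∈ M₁, p = (h₁, h₂) * (Φ₁ m.1, Φ₂ m.2) * (k₁, k₂)) :
    (M₁.comap (MonoidHom.inl A B)).map Φ₁.toMonoidHom = M₂.comap (MonoidHom.inl A B) := by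
  ext x
  simp only [Subgroup.mem_map, Subgroup.mem_comap, MonoidHom.inl_apply,
    MulEquiv.coe_toMonoidHom]
  constructor
  · rintro ⟨g, hg, rfl⟩
    have p1 : ((h₁ * Φ₁ g * k₁, h₂ * k₂) : A × B) ∈ M₂ := by
      rw [heq]
      exact ⟨(g, 1), hg, by simp [Prod.ext_iff, mul_assoc]⟩
    have p2 : ((h₁ * k₁, h₂ * k₂) : A × B) ∈ M₂ := by
      rw [heq]
      exact ⟨1, M₁.one_mem, by simp [Prod.ext_iff]⟩
    have p3 := M₂.mul_mem p1 (M₂.inv_mem p2)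
    have e3 : ((h₁ * Φ₁ g * k₁, h₂ * k₂) * (h₁ * k₁, h₂ * k₂)⁻¹ : A × B)
        = (h₁ * Φ₁ g * h₁⁻¹, 1) := by
      simp only [Prod.inv_mk, Prod.mk_mul_mk, Prod.mk.injEq]
      constructor <;> group
    rw [e3] at p3
    have h4 := slice_conj_fst M₂ hf21 p3 h₁⁻¹
    have e4 : h₁⁻¹ * (h₁ * Φ₁ g * h₁⁻¹) * h₁⁻¹⁻¹ = Φ₁ g := by group
    rw [e4] at h4
    exact h4
  · intro hx
    obtain ⟨m, hm, hme⟩ := (heq _).1 hx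
    obtain ⟨m₀, hm₀, hm₀e⟩ := (heq _).1 M₂.one_mem
    rw [Prod.ext_iff] at hme hm₀e
    obtain ⟨hme1, hme2⟩ := hme
    obtain ⟨hm₀e1, hm₀e2⟩ := hm₀e
    simp only [Prod.mk_mul_mk, Prod.fst_one, Prod.snd_one] at hme1 hme2 hm₀e1 hm₀e2
    have h22 : m.2 = m₀.2 := by
      apply Φ₂.injective
      have h' : h₂ * Φ₂ m.2 * k₂ = h₂ * Φ₂ m₀.2 * k₂ := hme2.symm.trans hm₀e2
      have h'' := mul_right_cancel h'
      exact mul_left_cancel h''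
    have hc : ((m.1 * m₀.1⁻¹, (1 : B)) : A × B) ∈ M₁ := by
      have h := M₁.mul_mem hm (M₁.inv_mem hm₀)
      have e : (m * m₀⁻¹ : A × B) = (m.1 * m₀.1⁻¹, m.2 * m₀.2⁻¹) := rfl
      rw [e, h22, mul_inv_cancel] at h
      exact h
    have hc2 := slice_conj_fst M₁ hf11 hc (Φ₁.symm h₁)
    refine ⟨Φ₁.symm h₁ * (m.1 * m₀.1⁻¹) * (Φ₁.symm h₁)⁻¹, hc2, ?_⟩
    have e5 : Φ₁ (Φ₁.symm h₁ * (m.1 * m₀.1⁻¹) * (Φ₁.symm h₁)⁻¹)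
        = h₁ * (Φ₁ m.1 * (Φ₁ m₀.1)⁻¹) * h₁⁻¹ := by
      simp [map_mul, map_inv]
    rw [e5]
    have e1 : Φ₁ m.1 = h₁⁻¹ * x * k₁⁻¹ := by rw [hme1]; group
    have e0 : Φ₁ m₀.1 = h₁⁻¹ * k₁⁻¹ := by
      have h' : h₁ * Φ₁ m₀.1 * k₁ = 1 := hm₀e1.symm
      have h'' : Φ₁ m₀.1 = h₁⁻¹ * (h₁ * Φ₁ m₀.1 * k₁) * k₁⁻¹ := by group
      rw [h'', h'] ; group
    rw [e1, e0]; group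

lemma slices_aux_snd {A B : Type*} [Group A] [Group B] (M₁ M₂ : Subgroup (A × B))
    (hf12 : M₁.map (MonoidHom.snd A B) = ⊤) (hf22 : M₂.map (MonoidHom.snd A B) = ⊤)
    (Φ₁ : A ≃* A) (Φ₂ : B ≃* B) (h₁ k₁ : A) (h₂ k₂ : B)
    (heq : ∀ p : A × B, p ∈ M₂ ↔ ∃ m ∈ M₁, p = (h₁, h₂) * (Φ₁ m.1, Φ₂ m.2) * (k₁, k₂)) :
    (M₁.comap (MonoidHom.inr A B)).map Φ₂.toMonoidHom = M₂.comap (MonoidHom.inr A B) := by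
  ext x
  simp only [Subgroup.mem_map, Subgroup.mem_comap, MonoidHom.inr_apply,
    MulEquiv.coe_toMonoidHom]
  constructor
  · rintro ⟨g, hg, rfl⟩
    have p1 : ((h₁ * k₁, h₂ * Φ₂ g * k₂) : A × B) ∈ M₂ := by
      rw [heq]
      exact ⟨(1, g), hg, by simp [Prod.ext_iff, mul_assoc]⟩
    have p2 : ((h₁ * k₁, h₂ * k₂) : A × B) ∈ M₂ := by
      rw [heq]
      exact ⟨1, M₁.one_mem, by simp [Prod.ext_iff]⟩
    have p3 := M₂.mul_mem p1 (M₂.inv_mem p2)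
    have e3 : ((h₁ * k₁, h₂ * Φ₂ g * k₂) * (h₁ * k₁, h₂ * k₂)⁻¹ : A × B)
        = (1, h₂ * Φ₂ g * h₂⁻¹) := by
      simp only [Prod.inv_mk, Prod.mk_mul_mk, Prod.mk.injEq]
      constructor <;> group
    rw [e3] at p3
    have h4 := slice_conj_snd M₂ hf22 p3 h₂⁻¹
    have e4 : h₂⁻¹ * (h₂ * Φ₂ g * h₂⁻¹) * h₂⁻¹⁻¹ = Φ₂ g := by group
    rw [e4] at h4
    exact h4
  · intro hx
    obtain ⟨m, hm, hme⟩ := (heq _).1 hx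
    obtain ⟨m₀, hm₀, hm₀e⟩ := (heq _).1 M₂.one_mem
    rw [Prod.ext_iff] at hme hm₀e
    obtain ⟨hme1, hme2⟩ := hme
    obtain ⟨hm₀e1, hm₀e2⟩ := hm₀e
    simp only [Prod.mk_mul_mk, Prod.fst_one, Prod.snd_one] at hme1 hme2 hm₀e1 hm₀e2
    have h11 : m.1 = m₀.1 := by
      apply Φ₁.injective
      have h' : h₁ * Φ₁ m.1 * k₁ = h₁ * Φ₁ m₀.1 * k₁ := hme1.symm.trans hm₀e1
      have h'' := mul_right_cancel h'
      exact mul_left_cancel h''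
    have hc : (((1 : A), m.2 * m₀.2⁻¹) : A × B) ∈ M₁ := by
      have h := M₁.mul_mem hm (M₁.inv_mem hm₀)
      have e : (m * m₀⁻¹ : A × B) = (m.1 * m₀.1⁻¹, m.2 * m₀.2⁻¹) := rfl
      rw [e, h11, mul_inv_cancel] at h
      exact h
    have hc2 := slice_conj_snd M₁ hf12 hc (Φ₂.symm h₂)
    refine ⟨Φ₂.symm h₂ * (m.2 * m₀.2⁻¹) * (Φ₂.symm h₂)⁻¹, hc2, ?_⟩
    have e5 : Φ₂ (Φ₂.symm h₂ * (m.2 * m₀.2⁻¹) * (Φ₂.symm h₂)⁻¹)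
        = h₂ * (Φ₂ m.2 * (Φ₂ m₀.2)⁻¹) * h₂⁻¹ := by
      simp [map_mul, map_inv]
    rw [e5]
    have e1 : Φ₂ m.2 = h₂⁻¹ * x * k₂⁻¹ := by rw [hme2]; group
    have e0 : Φ₂ m₀.2 = h₂⁻¹ * k₂⁻¹ := by
      have h' : h₂ * Φ₂ m₀.2 * k₂ = 1 := hm₀e2.symm
      have h'' : Φ₂ m₀.2 = h₂⁻¹ * (h₂ * Φ₂ m₀.2 * k₂) * k₂⁻¹ := by group
      rw [h'', h'] ; group
    rw [e1, e0]; group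

/-- If `M₁, M₂ ≤ G₁ × G₂` both have full one-dimensional projections and
`(h₁,h₂)·(Φ₁×Φ₂)(M₁)·(k₁,k₂) = M₂` for automorphisms `Φᵢ` of `Gᵢ`, then the
automorphisms carry the slices of `M₁` onto the slices of `M₂`. -/
theorem slices_respected {G₁ G₂ : Type*} [Group G₁] [Group G₂]
    (M₁ M₂ : Subgroup (G₁ × G₂))
    (hf11 : M₁.map (MonoidHom.fst G₁ G₂) = ⊤) (hf12 : M₁.map (MonoidHom.snd G₁ G₂) = ⊤)
    (hf21 : M₂.map (MonoidHom.fst G₁ G₂) = ⊤) (hf22 : M₂.map (MonoidHom.snd G₁ G₂) = ⊤)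
    (Φ₁ : G₁ ≃* G₁) (Φ₂ : G₂ ≃* G₂) (h₁ k₁ : G₁) (h₂ k₂ : G₂)
    (heq : ∀ p : G₁ × G₂, p ∈ M₂ ↔
        ∃ m ∈ M₁, p = (h₁, h₂) * (Φ₁ m.1, Φ₂ m.2) * (k₁, k₂)) :
    (M₁.comap (MonoidHom.inl G₁ G₂)).map Φ₁.toMonoidHom = M₂.comap (MonoidHom.inl G₁ G₂) ∧
      (M₁.comap (MonoidHom.inr G₁ G₂)).map Φ₂.toMonoidHom = M₂.comap (MonoidHom.inr G₁ G₂) := by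
  exact ⟨slices_aux_fst M₁ M₂ hf11 hf21 Φ₁ Φ₂ h₁ k₁ h₂ k₂ heq,
    slices_aux_snd M₁ M₂ hf12 hf22 Φ₁ Φ₂ h₁ k₁ h₂ k₂ heq⟩
end

section
/- Let $T$ be an invertible measure-preserving transformation of a probability space $(X,\mu)$ and let $\mathcal{F} \subseteq \Sigma_X$ be a $T$-invariant sub-$\sigma$-algebra (a factor). Let $\mathcal{I}$ denote the $\sigma$-algebra of $T$-invariant sets. Then for every $A \in \mathcal{F}$ and every $T$-invariant set $B$, $\mu(A\cap B) = \int_X \mathsf{E}_\mu(1_A \mid \mathcal{I}\cap\mathcal{F})\cdot \mathsf{E}_\mu(1_B \mid \mathcal{I}\cap\mathcal{F})\, d\mu$; that is, $\mathcal{F}$ and $\mathcal{I}$ are relatively independent over $\mathcal{I}\cap\mathcal{F}$. -/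
open MeasureTheory

section Helpers

variable {X : Type*} [MeasurableSpace X] {μ : Measure X}

lemma symmDiff_null_trans {a b c : Set X} (h1 : μ (symmDiff a b) = 0)
    (h2 : μ (symmDiff b c) = 0) : μ (symmDiff a c) = 0 :=
  measure_mono_null (symmDiff_triangle a b c) (measure_union_null h1 h2)

lemma symmDiff_null_comm {a b : Set X} (h : μ (symmDiff a b) = 0) :
    μ (symmDiff b a) = 0 := by rwa [symmDiff_comm]

lemma preimage_symmDiff_null {T : X → X} (hT : MeasurePreserving T μ μ) {a b : Set X}
    (h : μ (symmDiff a b) = 0) : μ (symmDiff (T ⁻¹' a) (T ⁻¹' b)) = 0 := by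
  rw [← Set.preimage_symmDiff]
  exact hT.quasiMeasurePreserving.preimage_null h

lemma indicator_ae_eq_of_symmDiff_null {a b : Set X} (h : μ (symmDiff a b) = 0) :
    a.indicator (fun _ => (1:ℝ)) =ᵐ[μ] b.indicator fun _ => (1:ℝ) := by
  have h' : ∀ᵐ x ∂μ, x ∉ symmDiff a b := by
    rw [ae_iff]; simpa using h
  filter_upwards [h'] with x hx
  rw [Set.mem_symmDiff] at hx
  push_neg at hx
  by_cases hxa : x ∈ a <;> by_cases hxb : x ∈ b <;>
    simp [Set.indicator_apply, hxa, hxb] at hx ⊢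

end Helpers

/-- The σ-algebra of sets invariant (modulo `μ`-null sets) under `T`. -/
noncomputable def invSigma {X : Type*} [MeasurableSpace X] (μ : Measure X) (T : X → X) :
    MeasurableSpace X where
  MeasurableSet' A := MeasurableSet A ∧ μ (symmDiff A (T ⁻¹' A)) = 0
  measurableSet_empty := ⟨MeasurableSet.empty, by simp⟩
  measurableSet_compl A hA := ⟨hA.1.compl, by
    rw [Set.preimage_compl, compl_symmDiff_compl]; exact hA.2⟩
  measurableSet_iUnion f hf := ⟨MeasurableSet.iUnion fun i => (hf i).1, by
    have hsub : symmDiff (⋃ i, f i) (T ⁻¹' ⋃ i, f i) ⊆ ⋃ i, symmDiff (f i) (T ⁻¹' f i) := by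
      rw [Set.preimage_iUnion]
      intro x hx
      rcases Set.mem_symmDiff.1 hx with ⟨hx1, hx2⟩ | ⟨hx1, hx2⟩
      · rcases Set.mem_iUnion.1 hx1 with ⟨i, hi⟩
        exact Set.mem_iUnion.2 ⟨i, Set.mem_symmDiff.2
          (Or.inl ⟨hi, fun h => hx2 (Set.mem_iUnion.2 ⟨i, h⟩)⟩)⟩
      · rcases Set.mem_iUnion.1 hx1 with ⟨i, hi⟩
        exact Set.mem_iUnion.2 ⟨i, Set.mem_symmDiff.2
          (Or.inr ⟨hi, fun h => hx2 (Set.mem_iUnion.2 ⟨i, h⟩)⟩)⟩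
    exact measure_mono_null hsub (measure_iUnion_null fun i => (hf i).2)⟩

set_option maxHeartbeats 2000000 in
set_option synthInstance.maxHeartbeats 1000000 in
/-- A `T`-invariant factor `F` and the invariant σ-algebra `I` of `T` are
relatively independent over `I ⊓ F`. -/
theorem factor_relatively_independent_of_invariant {X : Type*}
    (F : MeasurableSpace X) [m0 : MeasurableSpace X]
    (μ : Measure X) [IsProbabilityMeasure μ]
    (T : X → X) (hT : MeasurePreserving T μ μ) (hTbij : Function.Bijective T)
    (hF : F ≤ m0)
    (hFinv1 : ∀ A, MeasurableSet[F] A →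
        ∃ B, MeasurableSet[F] B ∧ μ (symmDiff (T ⁻¹' A) B) = 0)
    (hFinv2 : ∀ A, MeasurableSet[F] A →
        ∃ B, MeasurableSet[F] B ∧ μ (symmDiff A (T ⁻¹' B)) = 0) :
    ∀ A B : Set X, MeasurableSet[F] A → MeasurableSet B → μ (symmDiff B (T ⁻¹' B)) = 0 →
      (μ (A ∩ B)).toReal =
        ∫ x, ((μ[A.indicator (fun _ => (1 : ℝ)) | invSigma μ T ⊓ F]) x) *
            ((μ[B.indicator (fun _ => (1 : ℝ)) | invSigma μ T ⊓ F]) x) ∂μ := by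
  intro A B hA hB hBinv
  classical
  haveI : Fact ((1:ENNReal) ≤ 2) := ⟨one_le_two⟩
  have hI : invSigma μ T ≤ m0 := fun s hs => hs.1
  have hG : invSigma μ T ⊓ F ≤ m0 := le_trans inf_le_left hI
  haveI hGsf : SigmaFinite (μ.trim hG) := inferInstance
  set fA := A.indicator fun _ => (1:ℝ) with hfAdef
  set fB := B.indicator fun _ => (1:ℝ) with hfBdef
  have hAm : MeasurableSet A := hF A hA
  have hBI : MeasurableSet[invSigma μ T] B := ⟨hB, hBinv⟩
  -- the Koopman operator on L²
  set U : Lp ℝ 2 μ →ₗᵢ[ℝ] Lp ℝ 2 μ := Lp.compMeasurePreservingₗᵢ ℝ T hT with hUdef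
  set U' : Lp ℝ 2 μ →L[ℝ] Lp ℝ 2 μ := U.toContinuousLinearMap with hU'def
  have hU'le : ‖U'‖ ≤ 1 := U.norm_toContinuousLinearMap_le
  have hU'app : ∀ z : Lp ℝ 2 μ, ⇑(U' z) =ᵐ[μ] ⇑z ∘ T := fun z =>
    Lp.coeFn_compMeasurePreserving z hT
  have hcomp : ∀ {g g' : X → ℝ}, g =ᵐ[μ] g' → g ∘ T =ᵐ[μ] g' ∘ T := fun h =>
    MeasureTheory.ae_eq_comp hT.measurable.aemeasurable (by rwa [hT.map_eq])
  -- indicators of invariant sets are fixed points of the Koopman operator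
  have hfix : ∀ (s : Set X) (hs : MeasurableSet[invSigma μ T] s),
      U' (indicatorConstLp 2 (hI s hs) (measure_ne_top μ s) (1:ℝ))
        = indicatorConstLp 2 (hI s hs) (measure_ne_top μ s) (1:ℝ) := by
    intro s hs
    refine Lp.ext ?_
    have h2 : ⇑(indicatorConstLp 2 (hI s hs) (measure_ne_top μ s) (1:ℝ)) =ᵐ[μ]
        s.indicator fun _ => (1:ℝ) := indicatorConstLp_coeFn
    refine ((hU'app _).trans ?_).trans h2.symm
    refine (hcomp h2).trans ?_
    have h3 : (s.indicator (fun _ => (1:ℝ))) ∘ T = (T ⁻¹' s).indicator fun _ => (1:ℝ) := rfl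
    rw [h3]
    exact indicator_ae_eq_of_symmDiff_null (symmDiff_null_comm hs.2)
  set xA : Lp ℝ 2 μ := indicatorConstLp 2 hAm (measure_ne_top μ A) (1:ℝ) with hxAdef
  have htend := U'.tendsto_birkhoffAverage_orthogonalProjection hU'le xA
  set K : Submodule ℝ (Lp ℝ 2 μ) := U'.eqLocus (1 : Lp ℝ 2 μ →L[ℝ] Lp ℝ 2 μ) with hKdef
  set y : Lp ℝ 2 μ := ↑(K.orthogonalProjectionOnto xA) with hydef
  have hyfix : U' y = y := by
    have h : y ∈ K := (K.orthogonalProjectionOnto xA).2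
    simpa using LinearMap.mem_eqLocus.mp h
  have hyT : ⇑y ∘ T =ᵐ[μ] ⇑y := by
    have h := hU'app y
    rw [hyfix] at h
    exact h.symm
  -- orthogonality: integrals of xA and y agree on invariant sets
  have hxAint : Integrable (⇑xA) μ := (Lp.memLp xA).integrable one_le_two
  have hyint : Integrable (⇑y) μ := (Lp.memLp y).integrable one_le_two
  have horth : ∀ (s : Set X), MeasurableSet[invSigma μ T] s →
      ∫ a in s, (⇑xA) a ∂μ = ∫ a in s, (⇑y) a ∂μ := by
    intro s hs
    set zs : Lp ℝ 2 μ := indicatorConstLp 2 (hI s hs) (measure_ne_top μ s) (1:ℝ) with hzs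
    have hzsK : zs ∈ K := LinearMap.mem_eqLocus.mpr (by simpa using hfix s hs)
    have hperp : xA - y ∈ Kᗮ := Submodule.sub_starProjection_mem_orthogonal (K := K) xA
    have hinner : (inner ℝ zs (xA - y) : ℝ) = 0 :=
      Submodule.inner_right_of_mem_orthogonal hzsK hperp
    rw [L2.inner_def] at hinner
    have hzsae : ⇑zs =ᵐ[μ] s.indicator fun _ => (1:ℝ) := indicatorConstLp_coeFn
    have hsubae : ⇑(xA - y) =ᵐ[μ] ⇑xA - ⇑y := Lp.coeFn_sub xA y
    have heq : (fun a => (inner ℝ ((⇑zs) a) ((⇑(xA - y)) a) : ℝ)) =ᵐ[μ]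
        s.indicator (fun a => (⇑xA) a - (⇑y) a) := by
      filter_upwards [hzsae, hsubae] with a h1 h2
      rw [RCLike.inner_apply, starRingEnd_apply, star_trivial, h1, h2]
      by_cases ha : a ∈ s <;>
        simp [Set.indicator_of_mem, Set.indicator_of_notMem, ha]
    rw [integral_congr_ae heq, integral_indicator (hI s hs)] at hinner
    have := integral_sub (hxAint.integrableOn (s := s)) (hyint.integrableOn (s := s))
    rw [this] at hinner
    linarith
  -- the iterates of xA are a.e. F-measurable
  have hIter : ∀ n : ℕ, ∃ C, MeasurableSet[F] C ∧
      ⇑((⇑U')^[n] xA) =ᵐ[μ] C.indicator fun _ => (1:ℝ) := by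
    intro n
    induction n with
    | zero => exact ⟨A, hA, by simpa using (indicatorConstLp_coeFn :
        ⇑xA =ᵐ[μ] A.indicator fun _ => (1:ℝ))⟩
    | succ n ih =>
      obtain ⟨C, hC, hCae⟩ := ih
      obtain ⟨D, hD, hDnull⟩ := hFinv1 C hC
      refine ⟨D, hD, ?_⟩
      rw [Function.iterate_succ_apply']
      refine ((hU'app _).trans ?_)
      refine (hcomp hCae).trans ?_
      have h3 : (C.indicator (fun _ => (1:ℝ))) ∘ T = (T ⁻¹' C).indicator fun _ => (1:ℝ) := rfl
      rw [h3]
      exact indicator_ae_eq_of_symmDiff_null hDnull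
  -- hence y is a.e. F-measurable
  have hyF : AEStronglyMeasurable[F] (⇑y) μ := by
    have hclosed : IsClosed {f : Lp ℝ 2 μ | AEStronglyMeasurable[F] (⇑f) μ} :=
      isClosed_aestronglyMeasurable hF
    refine hclosed.mem_of_tendsto htend (Filter.Eventually.of_forall fun N => ?_)
    have hmem : ∀ i : ℕ, (⇑U')^[i] xA ∈ lpMeas ℝ ℝ F 2 μ := fun i => by
      obtain ⟨C, hC, hCae⟩ := hIter i
      exact mem_lpMeas_iff_aestronglyMeasurable.mpr
        ⟨C.indicator fun _ => (1:ℝ), stronglyMeasurable_const.indicator hC, hCae⟩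
    have hmem2 : birkhoffAverage ℝ (⇑U') id N xA ∈ lpMeas ℝ ℝ F 2 μ := by
      simp only [birkhoffAverage, birkhoffSum, id]
      exact Submodule.smul_mem _ _ (Submodule.sum_mem _ fun i _ => hmem i)
    exact mem_lpMeas_iff_aestronglyMeasurable.mp hmem2
  obtain ⟨w, hwF, hyw⟩ := hyF
  -- a measurable representative of y
  have hyam := (Lp.aestronglyMeasurable y)
  set v : X → ℝ := hyam.mk (⇑y) with hvdef
  have hv : Measurable v := hyam.stronglyMeasurable_mk.measurable
  have hyv : ⇑y =ᵐ[μ] v := hyam.ae_eq_mk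
  have hvT : v ∘ T =ᵐ[μ] v := ((hcomp hyv.symm).trans hyT).trans hyv
  have hvw : v =ᵐ[μ] w := hyv.symm.trans hyw
  -- v is I-measurable
  have hvI : ∀ c : ℝ, MeasurableSet[invSigma μ T] (v ⁻¹' Set.Ioi c) := by
    intro c
    refine ⟨hv measurableSet_Ioi, ?_⟩
    have hsub : symmDiff (v ⁻¹' Set.Ioi c) (T ⁻¹' (v ⁻¹' Set.Ioi c)) ⊆
        {x | ¬ (v ∘ T) x = v x} := by
      intro x hx
      rcases Set.mem_symmDiff.1 hx with ⟨h1, h2⟩ | ⟨h1, h2⟩ <;>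
        · simp only [Set.mem_preimage, Set.mem_Ioi] at h1 h2
          intro h
          simp only [Function.comp_apply] at h
          first
            | exact h2 (by simpa [Set.mem_preimage, Set.mem_Ioi, h] using h1)
            | exact h2 (by simpa [Set.mem_preimage, Set.mem_Ioi, ← h] using h1)
    exact measure_mono_null hsub hvT
  -- w is I-measurable (as an F-measurable a.e. modification of v)
  have hvwnull : ∀ s : Set ℝ, μ (symmDiff (v ⁻¹' s) (w ⁻¹' s)) = 0 := by
    intro s
    have hsub : symmDiff (v ⁻¹' s) (w ⁻¹' s) ⊆ {x | ¬ v x = w x} := by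
      intro x hx
      rcases Set.mem_symmDiff.1 hx with ⟨h1, h2⟩ | ⟨h1, h2⟩ <;>
        · intro h
          first
            | exact h2 (by rwa [Set.mem_preimage, ← h])
            | exact h2 (by rwa [Set.mem_preimage, h])
    exact measure_mono_null hsub hvw
  have hwI : Measurable[invSigma μ T] w := by
    apply measurable_of_Ioi
    intro c
    refine ⟨hF _ (hwF.measurable measurableSet_Ioi), ?_⟩
    have h1 : μ (symmDiff (w ⁻¹' Set.Ioi c) (v ⁻¹' Set.Ioi c)) = 0 :=
      symmDiff_null_comm (hvwnull _)
    have h2 := (hvI c).2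
    have h3 : μ (symmDiff (T ⁻¹' (v ⁻¹' Set.Ioi c)) (T ⁻¹' (w ⁻¹' Set.Ioi c))) = 0 :=
      preimage_symmDiff_null hT (hvwnull _)
    exact symmDiff_null_trans (symmDiff_null_trans h1 h2) h3
  have hwG : Measurable[invSigma μ T ⊓ F] w := fun s hs =>
    MeasurableSpace.measurableSet_inf.mpr ⟨hwI hs, hwF.measurable hs⟩
  -- identify w with the conditional expectation of fA on G
  have hfAint : Integrable fA μ := (integrable_const (1:ℝ)).indicator hAm
  have hfBint : Integrable fB μ := (integrable_const (1:ℝ)).indicator hB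
  have hwint : Integrable w μ := (hyint.congr hyw)
  have hxAae : ⇑xA =ᵐ[μ] fA := indicatorConstLp_coeFn
  have hsetint : ∀ (s : Set X), MeasurableSet[invSigma μ T] s →
      ∫ x in s, w x ∂μ = ∫ x in s, fA x ∂μ := by
    intro s hs
    have e1 : ∫ x in s, w x ∂μ = ∫ x in s, (⇑y) x ∂μ :=
      integral_congr_ae (Filter.EventuallyEq.restrict hyw.symm)
    have e2 : ∫ x in s, (⇑xA) x ∂μ = ∫ x in s, fA x ∂μ :=
      integral_congr_ae (Filter.EventuallyEq.restrict hxAae)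
    rw [e1, ← horth s hs, e2]
  have hw_cond : w =ᵐ[μ] μ[fA | invSigma μ T ⊓ F] := by
    refine ae_eq_condExp_of_forall_setIntegral_eq hG hfAint
      (fun s _ _ => hwint.integrableOn)
      (fun s hs _ => hsetint s (MeasurableSpace.measurableSet_inf.mp hs).1)
      ⟨w, hwG.stronglyMeasurable, Filter.EventuallyEq.rfl⟩
  -- final computation
  have hprod : (μ[fA | invSigma μ T ⊓ F]) * fB = B.indicator (μ[fA | invSigma μ T ⊓ F]) := by
    funext x
    by_cases hx : x ∈ B <;>
      simp [hfBdef, Set.indicator_of_mem, Set.indicator_of_notMem, hx]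
  have hcdint : Integrable ((μ[fA | invSigma μ T ⊓ F]) * fB) μ := by
    rw [hprod]; exact integrable_condExp.indicator hB
  have hmul := condExp_mul_of_stronglyMeasurable_left (m := invSigma μ T ⊓ F) (μ := μ)
    (stronglyMeasurable_condExp (f := fA)) hcdint hfBint
  calc (μ (A ∩ B)).toReal
      = ∫ x in B, fA x ∂μ := by
        rw [← integral_indicator hB]
        have : B.indicator fA = (B ∩ A).indicator fun _ => (1:ℝ) := by
          rw [hfAdef, Set.indicator_indicator]
        rw [this, integral_indicator_const (1:ℝ) (hB.inter hAm), Set.inter_comm B A,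
          smul_eq_mul, mul_one, measureReal_def]
    _ = ∫ x in B, (⇑xA) x ∂μ :=
        (integral_congr_ae (Filter.EventuallyEq.restrict hxAae)).symm
    _ = ∫ x in B, (⇑y) x ∂μ := horth B hBI
    _ = ∫ x in B, w x ∂μ :=
        integral_congr_ae (Filter.EventuallyEq.restrict (hyv.trans hvw))
    _ = ∫ x in B, (μ[fA | invSigma μ T ⊓ F]) x ∂μ :=
        integral_congr_ae (Filter.EventuallyEq.restrict hw_cond)
    _ = ∫ x, ((μ[fA | invSigma μ T ⊓ F]) * fB) x ∂μ := by
        rw [hprod, integral_indicator hB]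
    _ = ∫ x, (μ[(μ[fA | invSigma μ T ⊓ F]) * fB | invSigma μ T ⊓ F]) x ∂μ := (integral_condExp hG).symm
    _ = ∫ x, ((μ[fA | invSigma μ T ⊓ F]) * (μ[fB | invSigma μ T ⊓ F])) x ∂μ := integral_congr_ae hmul
    _ = ∫ x, (μ[fA | invSigma μ T ⊓ F]) x * (μ[fB | invSigma μ T ⊓ F]) x ∂μ := rfl
end

section
/- Let $T_1, T_2$ be commuting invertible measure-preserving transformations of a probability space $(X,\mu)$. Let $\mathcal{I}_1$ be the $\sigma$-algebra of $T_1$-invariant sets, $\mathcal{I}_2$ that of $T_2$-invariant sets, and $\mathcal{I}_{12}$ that of sets invariant under both $T_1$ and $T_2$. Then for every $A\in\mathcal{I}_1$ and $B\in\mathcal{I}_2$, $\mu(A\cap B) = \int_X \mathsf{E}_\mu(1_A\mid\mathcal{I}_{12})\cdot\mathsf{E}_\mu(1_B\mid\mathcal{I}_{12})\,d\mu$. -/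
open MeasureTheory

section Aux

variable {X : Type*} [m0 : MeasurableSpace X]

lemma invSigma_le (μ : Measure X) (T : X → X) : invSigma μ T ≤ m0 := fun _ hs => hs.1

lemma preimage_symmDiff' (T : X → X) (s t : Set X) :
    T ⁻¹' (symmDiff s t) = symmDiff (T ⁻¹' s) (T ⁻¹' t) := by
  simp only [Set.symmDiff_def, Set.sup_eq_union, Set.preimage_union, Set.preimage_diff]

lemma integral_comp_mp {μ : Measure X} {T : X → X} (hT : MeasurePreserving T μ μ)
    {φ : X → ℝ} (hφ : AEStronglyMeasurable φ μ) :
    ∫ x, φ (T x) ∂μ = ∫ x, φ x ∂μ := by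
  have h' : AEStronglyMeasurable φ (Measure.map T μ) := by rw [hT.map_eq]; exact hφ
  rw [← integral_map hT.aemeasurable h', hT.map_eq]

/-- Key lemma: the conditional expectation of a `T₁`-invariant indicator with respect to
the `T₂`-isotropy σ-algebra agrees a.e. with its conditional expectation w.r.t. the joint
isotropy σ-algebra. -/
lemma condexp_inv_aux (μ : Measure X) [IsProbabilityMeasure μ] (T₁ T₂ : X → X)
    (hT1 : MeasurePreserving T₁ μ μ) (hT2 : MeasurePreserving T₂ μ μ)
    (hcomm : T₁ ∘ T₂ = T₂ ∘ T₁)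
    (A : Set X) (hA : MeasurableSet A) (hAinv : μ (symmDiff A (T₁ ⁻¹' A)) = 0) :
    μ[A.indicator (fun _ => (1 : ℝ)) | invSigma μ T₂] =ᵐ[μ]
      μ[A.indicator (fun _ => (1 : ℝ)) | invSigma μ T₁ ⊓ invSigma μ T₂] := by
  have hm2 : invSigma μ T₂ ≤ m0 := invSigma_le μ T₂
  have hm' : invSigma μ T₁ ⊓ invSigma μ T₂ ≤ m0 := le_trans inf_le_right hm2
  set f := A.indicator (fun _ => (1 : ℝ)) with hfdef
  have hfsm : StronglyMeasurable f := stronglyMeasurable_const.indicator hA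
  have hfi : Integrable f μ := (integrable_const (1 : ℝ)).indicator hA
  set g := μ[f | invSigma μ T₂] with hgdef
  have hgsm : StronglyMeasurable[invSigma μ T₂] g := stronglyMeasurable_condExp
  have hgsm0 : StronglyMeasurable g := hgsm.mono hm2
  have hgi : Integrable g μ := integrable_condExp
  -- T₁ is measurable from (X, I₂) to (X, I₂)
  have hT1m2 : @Measurable X X (invSigma μ T₂) (invSigma μ T₂) T₁ := by
    intro s hs
    refine ⟨hT1.measurable hs.1, ?_⟩
    have hpre : T₂ ⁻¹' (T₁ ⁻¹' s) = T₁ ⁻¹' (T₂ ⁻¹' s) := by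
      rw [← Set.preimage_comp, ← Set.preimage_comp, hcomm]
    rw [hpre, ← preimage_symmDiff',
      hT1.measure_preimage ((hs.1.symmDiff (hT2.measurable hs.1)).nullMeasurableSet)]
    exact hs.2
  have hgT1sm : StronglyMeasurable[invSigma μ T₂] (g ∘ T₁) := hgsm.comp_measurable hT1m2
  have hgT1sm0 : StronglyMeasurable (g ∘ T₁) := hgT1sm.mono hm2
  -- bounds
  have hg0 : 0 ≤ᵐ[μ] g := condExp_nonneg (Filter.Eventually.of_forall fun x =>
    Set.indicator_nonneg (fun _ _ => zero_le_one) x)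
  have hfle : f ≤ᵐ[μ] fun _ => (1 : ℝ) := Filter.Eventually.of_forall fun x =>
    Set.indicator_le_self' (fun _ _ => zero_le_one) x
  have hg1 : g ≤ᵐ[μ] fun _ => (1 : ℝ) := by
    have := condExp_mono (m := invSigma μ T₂) (μ := μ) hfi (integrable_const 1) hfle
    rwa [condExp_const hm2] at this
  have hgb : ∀ᵐ x ∂μ, ‖g x‖ ≤ 1 := by
    filter_upwards [hg0, hg1] with x h0 h1
    rw [Real.norm_eq_abs, abs_le]
    exact ⟨by linarith [show (0:ℝ) ≤ g x from h0], h1⟩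
  have hgT1b : ∀ᵐ x ∂μ, ‖g (T₁ x)‖ ≤ 1 :=
    hT1.quasiMeasurePreserving.tendsto_ae.eventually hgb
  -- integrability of products
  have hgT1i : Integrable (g ∘ T₁) μ := by
    have h' : AEStronglyMeasurable g (Measure.map T₁ μ) := by
      rw [hT1.map_eq]; exact hgsm0.aestronglyMeasurable
    rw [← integrable_map_measure h' hT1.aemeasurable, hT1.map_eq]
    exact hgi
  have hi_gT1_f : Integrable (fun x => g (T₁ x) * f x) μ :=
    hfi.bdd_mul hgT1sm0.aestronglyMeasurable hgT1b
  have hi_gT1_g : Integrable (fun x => g (T₁ x) * g x) μ :=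
    hgi.bdd_mul hgT1sm0.aestronglyMeasurable hgT1b
  have hi_g_f : Integrable (fun x => g x * f x) μ :=
    hfi.bdd_mul hgsm0.aestronglyMeasurable hgb
  have hi_g_g : Integrable (fun x => g x * g x) μ :=
    hgi.bdd_mul hgsm0.aestronglyMeasurable hgb
  have hi_gT1_gT1 : Integrable (fun x => g (T₁ x) * g (T₁ x)) μ :=
    hgT1i.bdd_mul hgT1sm0.aestronglyMeasurable hgT1b
  have hi_g_gT1 : Integrable (fun x => g x * g (T₁ x)) μ :=
    hgT1i.bdd_mul hgsm0.aestronglyMeasurable hgb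
  -- f ∘ T₁ = f a.e.
  have hff : ∀ᵐ x ∂μ, f x = f (T₁ x) := by
    rw [ae_iff]
    refine measure_mono_null ?_ hAinv
    intro x hx
    simp only [Set.mem_setOf_eq, hfdef, Set.indicator_apply] at hx
    rw [Set.mem_symmDiff]
    by_cases h1 : x ∈ A <;> by_cases h2 : T₁ x ∈ A <;>
      simp [h1, h2, Set.mem_preimage] at hx ⊢
  -- Step D : ∫ g * f = ∫ g * g
  have stepD : ∫ x, g x * f x ∂μ = ∫ x, g x * g x ∂μ := by
    have hpull := condExp_mul_of_stronglyMeasurable_left (μ := μ) hgsm hi_g_f hfi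
    rw [← integral_condExp (μ := μ) hm2 (f := fun x => g x * f x)]
    exact integral_congr_ae hpull
  -- Step A : ∫ (g∘T₁) * f = ∫ (g∘T₁) * g
  have stepA : ∫ x, g (T₁ x) * f x ∂μ = ∫ x, g (T₁ x) * g x ∂μ := by
    have hpull := condExp_mul_of_stronglyMeasurable_left (μ := μ) hgT1sm hi_gT1_f hfi
    rw [← integral_condExp (μ := μ) hm2 (f := fun x => g (T₁ x) * f x)]
    exact integral_congr_ae hpull
  -- Step B : ∫ (g∘T₁) * f = ∫ (g∘T₁) * (f∘T₁)
  have stepB : ∫ x, g (T₁ x) * f x ∂μ = ∫ x, g (T₁ x) * f (T₁ x) ∂μ := by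
    refine integral_congr_ae ?_
    filter_upwards [hff] with x hx
    rw [← hx]
  -- Step C : ∫ (g∘T₁) * (f∘T₁) = ∫ g * f
  have stepC : ∫ x, g (T₁ x) * f (T₁ x) ∂μ = ∫ x, g x * f x ∂μ :=
    integral_comp_mp hT1 (hgsm0.mul hfsm).aestronglyMeasurable
  have stepE : ∫ x, g (T₁ x) * g (T₁ x) ∂μ = ∫ x, g x * g x ∂μ :=
    integral_comp_mp hT1 (hgsm0.mul hgsm0).aestronglyMeasurable
  have key : ∫ x, g (T₁ x) * g x ∂μ = ∫ x, g x * g x ∂μ := by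
    rw [← stepA, stepB, stepC, stepD]
  have key' : ∫ x, g x * g (T₁ x) ∂μ = ∫ x, g x * g x ∂μ := by
    rw [← key]
    exact integral_congr_ae (Filter.Eventually.of_forall fun x => mul_comm _ _)
  -- the L² norm of g∘T₁ - g vanishes
  have hexpand : ∀ x : X, (g (T₁ x) - g x) ^ 2 =
      (g (T₁ x) * g (T₁ x) - g (T₁ x) * g x) - (g x * g (T₁ x) - g x * g x) :=
    fun x => by ring
  have hsqi : Integrable (fun x => (g (T₁ x) - g x) ^ 2) μ := by
    have : (fun x => (g (T₁ x) - g x) ^ 2) = fun x =>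
        (g (T₁ x) * g (T₁ x) - g (T₁ x) * g x) - (g x * g (T₁ x) - g x * g x) :=
      funext hexpand
    rw [this]
    exact (hi_gT1_gT1.sub hi_gT1_g).sub (hi_g_gT1.sub hi_g_g)
  have hiL : Integrable (fun x => g (T₁ x) * g (T₁ x) - g (T₁ x) * g x) μ :=
    hi_gT1_gT1.sub hi_gT1_g
  have hiR : Integrable (fun x => g x * g (T₁ x) - g x * g x) μ :=
    hi_g_gT1.sub hi_g_g
  have i0 : ∫ x, ((g (T₁ x) * g (T₁ x) - g (T₁ x) * g x)
        - (g x * g (T₁ x) - g x * g x)) ∂μ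
      = ∫ x, (g (T₁ x) * g (T₁ x) - g (T₁ x) * g x) ∂μ
        - ∫ x, (g x * g (T₁ x) - g x * g x) ∂μ := integral_sub hiL hiR
  have i1 : ∫ x, (g (T₁ x) * g (T₁ x) - g (T₁ x) * g x) ∂μ
      = ∫ x, g (T₁ x) * g (T₁ x) ∂μ - ∫ x, g (T₁ x) * g x ∂μ :=
    integral_sub hi_gT1_gT1 hi_gT1_g
  have i2 : ∫ x, (g x * g (T₁ x) - g x * g x) ∂μ
      = ∫ x, g x * g (T₁ x) ∂μ - ∫ x, g x * g x ∂μ :=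
    integral_sub hi_g_gT1 hi_g_g
  have hzero : ∫ x, (g (T₁ x) - g x) ^ 2 ∂μ = 0 := by
    have e : ∫ x, (g (T₁ x) - g x) ^ 2 ∂μ
        = ∫ x, ((g (T₁ x) * g (T₁ x) - g (T₁ x) * g x)
            - (g x * g (T₁ x) - g x * g x)) ∂μ :=
      integral_congr_ae (Filter.Eventually.of_forall fun x => hexpand x)
    rw [e, i0, i1, i2, stepE, key, key']
    ring
  have hae : ∀ᵐ x ∂μ, g (T₁ x) = g x := by
    have h0 := (integral_eq_zero_iff_of_nonneg (fun x => sq_nonneg _) hsqi).1 hzero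
    filter_upwards [h0] with x hx
    have hx' : (g (T₁ x) - g x) ^ 2 = 0 := hx
    have := (pow_eq_zero_iff two_ne_zero).1 hx'
    linarith [this]
  -- g is measurable w.r.t. the joint isotropy σ-algebra
  have hgm' : Measurable[invSigma μ T₁ ⊓ invSigma μ T₂] g := by
    refine measurable_of_Ioi fun c => ?_
    have h2 : MeasurableSet[invSigma μ T₂] (g ⁻¹' Set.Ioi c) :=
      hgsm.measurable measurableSet_Ioi
    refine MeasurableSpace.measurableSet_inf.mpr ⟨⟨hm2 _ h2, ?_⟩, h2⟩
    refine measure_mono_null (t := {x | ¬ g (T₁ x) = g x}) ?_ (ae_iff.1 hae)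
    intro x hx
    rcases Set.mem_symmDiff.1 hx with ⟨h1, h2'⟩ | ⟨h1, h2'⟩
    · intro h
      apply h2'
      simp only [Set.mem_preimage, Set.mem_Ioi] at h1 ⊢
      rw [h]; exact h1
    · intro h
      apply h2'
      simp only [Set.mem_preimage, Set.mem_Ioi] at h1 ⊢
      rw [← h]; exact h1
  have hgsm' : StronglyMeasurable[invSigma μ T₁ ⊓ invSigma μ T₂] g :=
    hgm'.stronglyMeasurable
  -- conclude
  have h1 : μ[g | invSigma μ T₁ ⊓ invSigma μ T₂] = g :=
    condExp_of_stronglyMeasurable hm' hgsm' hgi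
  have h2 : μ[g | invSigma μ T₁ ⊓ invSigma μ T₂] =ᵐ[μ]
      μ[f | invSigma μ T₁ ⊓ invSigma μ T₂] :=
    condExp_condExp_of_le inf_le_right hm2
  exact h1 ▸ h2

end Aux

/-- For commuting measure-preserving transformations `T₁, T₂`, the isotropy
σ-algebras `I₁` and `I₂` are relatively independent over the joint isotropy
σ-algebra `I₁ ⊓ I₂`. -/
theorem isotropy_relatively_independent_pair {X : Type*} [m0 : MeasurableSpace X]
    (μ : Measure X) [IsProbabilityMeasure μ] (T₁ T₂ : X → X)
    (hT1 : MeasurePreserving T₁ μ μ) (hT2 : MeasurePreserving T₂ μ μ)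
    (hT1bij : Function.Bijective T₁) (hT2bij : Function.Bijective T₂)
    (hcomm : T₁ ∘ T₂ = T₂ ∘ T₁) :
    ∀ A B : Set X,
      MeasurableSet A → μ (symmDiff A (T₁ ⁻¹' A)) = 0 →
      MeasurableSet B → μ (symmDiff B (T₂ ⁻¹' B)) = 0 →
      (μ (A ∩ B)).toReal =
        ∫ x, ((μ[A.indicator (fun _ => (1 : ℝ)) | invSigma μ T₁ ⊓ invSigma μ T₂]) x) *
            ((μ[B.indicator (fun _ => (1 : ℝ)) | invSigma μ T₁ ⊓ invSigma μ T₂]) x) ∂μ := by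
  intro A B hA hAinv hB hBinv
  have hm2 : invSigma μ T₂ ≤ m0 := invSigma_le μ T₂
  have hm' : invSigma μ T₁ ⊓ invSigma μ T₂ ≤ m0 := le_trans inf_le_right hm2
  set f := A.indicator (fun _ => (1 : ℝ)) with hfdef
  set b := B.indicator (fun _ => (1 : ℝ)) with hbdef
  have hfi : Integrable f μ := (integrable_const (1 : ℝ)).indicator hA
  have hbi : Integrable b μ := (integrable_const (1 : ℝ)).indicator hB
  have hbsm2 : StronglyMeasurable[invSigma μ T₂] b :=
    stronglyMeasurable_const.indicator ⟨hB, hBinv⟩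
  have hbsm0 : StronglyMeasurable b := hbsm2.mono hm2
  have hbb : ∀ᵐ x ∂μ, ‖b x‖ ≤ 1 := Filter.Eventually.of_forall fun x => by
    by_cases h : x ∈ B <;> simp [hbdef, Set.indicator_apply, h]
  set g := μ[f | invSigma μ T₂] with hgdef
  have hgi : Integrable g μ := integrable_condExp
  set g' := μ[f | invSigma μ T₁ ⊓ invSigma μ T₂] with hg'def
  have hgg' : g =ᵐ[μ] g' := condexp_inv_aux μ T₁ T₂ hT1 hT2 hcomm A hA hAinv
  have hg'i : Integrable g' μ := integrable_condExp
  have hg'sm : StronglyMeasurable[invSigma μ T₁ ⊓ invSigma μ T₂] g' :=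
    stronglyMeasurable_condExp
  have hg'0 : 0 ≤ᵐ[μ] g' := condExp_nonneg (Filter.Eventually.of_forall fun x =>
    Set.indicator_nonneg (fun _ _ => zero_le_one) x)
  have hg'1 : g' ≤ᵐ[μ] fun _ => (1 : ℝ) := by
    have := condExp_mono (m := invSigma μ T₁ ⊓ invSigma μ T₂) (μ := μ) hfi
      (integrable_const 1) (Filter.Eventually.of_forall fun x =>
        Set.indicator_le_self' (fun _ _ => zero_le_one) x)
    rwa [condExp_const hm'] at this
  have hg'b : ∀ᵐ x ∂μ, ‖g' x‖ ≤ 1 := by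
    filter_upwards [hg'0, hg'1] with x h0 h1
    rw [Real.norm_eq_abs, abs_le]
    exact ⟨by linarith [show (0:ℝ) ≤ g' x from h0], h1⟩
  have hi_bf : Integrable (fun x => b x * f x) μ :=
    hfi.bdd_mul hbsm0.aestronglyMeasurable hbb
  have hi_bg : Integrable (fun x => b x * g x) μ :=
    hgi.bdd_mul hbsm0.aestronglyMeasurable hbb
  have hi_g'b : Integrable (fun x => g' x * b x) μ :=
    hbi.bdd_mul (hg'sm.mono hm').aestronglyMeasurable hg'b
  have e0 : (μ (A ∩ B)).toReal = ∫ x, b x * f x ∂μ := by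
    rw [← measureReal_def, ← integral_indicator_one (hA.inter hB)]
    refine integral_congr_ae (Filter.Eventually.of_forall fun x => ?_)
    by_cases h1 : x ∈ A <;> by_cases h2 : x ∈ B <;>
      simp [hfdef, hbdef, Set.indicator_apply, h1, h2]
  have e1 : ∫ x, b x * f x ∂μ = ∫ x, b x * g x ∂μ := by
    have hpull := condExp_mul_of_stronglyMeasurable_left (μ := μ) hbsm2 hi_bf hfi
    rw [← integral_condExp (μ := μ) hm2 (f := fun x => b x * f x)]
    exact integral_congr_ae hpull
  have e2 : ∫ x, b x * g x ∂μ = ∫ x, g' x * b x ∂μ := by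
    refine integral_congr_ae ?_
    filter_upwards [hgg'] with x hx
    rw [hx, mul_comm]
  have e3 : ∫ x, g' x * b x ∂μ =
      ∫ x, g' x * (μ[b | invSigma μ T₁ ⊓ invSigma μ T₂]) x ∂μ := by
    have hpull := condExp_mul_of_stronglyMeasurable_left (μ := μ) hg'sm hi_g'b hbi
    rw [← integral_condExp (μ := μ) hm' (f := fun x => g' x * b x)]
    exact integral_congr_ae hpull
  rw [e0, e1, e2, e3]
end
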